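/- There exists a constant C > 0 depending only on K₀, σ_L, σ_U such that for all measurable functions b, b₀ : [0,1] → ℝ with |b(x)| ≤ K₀ and |b₀(x)| ≤ K₀ for all x ∈ [0,1], the invariant densities satisfy the pointwise bound |π_b(x) − π_{b₀}(x)| ≤ C ‖b − b₀‖₂ for every x ∈ [0,1], and consequently the L² bound ‖π_b − π_{b₀}‖₂ ≤ C ‖b − b₀‖₂. -/

import Mathlib

open MeasureTheory Real

/-- `I_b(x) = ∫₀ˣ 2 b(y) / σ(y)² dy`. -/
noncomputable def Ib (σ b : ℝ → ℝ) (x : ℝ) : ℝ :=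
  ∫ y in (0:ℝ)..x, 2 * b y / (σ y) ^ 2

/-- The normalising constant `H_b`. -/
noncomputable def Hb (σ b : ℝ → ℝ) : ℝ :=
  ∫ x in (0:ℝ)..1, (Real.exp (Ib σ b x) / (σ x) ^ 2) *
    (Real.exp (Ib σ b 1) * (∫ y in x..(1:ℝ), Real.exp (-(Ib σ b y))) +
      ∫ y in (0:ℝ)..x, Real.exp (-(Ib σ b y)))

/-- The invariant density `π_b`. -/
noncomputable def πb (σ b : ℝ → ℝ) (x : ℝ) : ℝ :=
  (Real.exp (Ib σ b x) / (Hb σ b * (σ x) ^ 2)) *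
    (Real.exp (Ib σ b 1) * (∫ y in x..(1:ℝ), Real.exp (-(Ib σ b y))) +
      ∫ y in (0:ℝ)..x, Real.exp (-(Ib σ b y)))

/-- The `L²([0,1])`-norm of a function. -/
noncomputable def L2norm (f : ℝ → ℝ) : ℝ :=
  Real.sqrt (∫ x in (0:ℝ)..1, f x ^ 2)

/-!
Write `π_b = F_b / ∫₀¹ F_b` with `F_b = e^{I_b} σ⁻² G_b`, where `G_b` is the bracket. On `[0,1]`
we have `|I_b| ≤ M := 2 K₀ / σ_L²`, so `F_b` is pinched between two positive constants depending
only on `K₀, σ_L, σ_U`. Since `exp` is `e^M`-Lipschitz on `[-M, M]`, every ingredient of `F_b`, and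
hence `F_b` and `∫₀¹ F_b`, moves by at most a constant times
`sup |I_b - I_{b₀}| ≤ (2 / σ_L²) ‖b - b₀‖₁ ≤ (2 / σ_L²) ‖b - b₀‖₂`.
A quotient with denominators bounded away from zero inherits this Lipschitz bound, and the `L²`
bound follows from the pointwise one.
-/

open Set

namespace InvariantDensity

lemma abs_exp_sub_exp_le {s t m : ℝ} (hs : |s| ≤ m) (ht : |t| ≤ m) :
    |exp s - exp t| ≤ exp m * |s - t| :=
  (convex_Icc (-m) m).norm_image_sub_le_of_norm_hasDerivWithin_le
    (fun u _ => (hasDerivAt_exp u).hasDerivWithinAt)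
    (fun u hu => by simpa [abs_of_pos (exp_pos u)] using exp_le_exp.2 hu.2)
    (abs_le.1 ht) (abs_le.1 hs)

lemma abs_mul_sub_mul_le (a a₀ c c₀ : ℝ) :
    |a * c - a₀ * c₀| ≤ |a - a₀| * |c| + |a₀| * |c - c₀| := by
  calc |a * c - a₀ * c₀| = |(a - a₀) * c + a₀ * (c - c₀)| := by congr 1; ring
    _ ≤ |a - a₀| * |c| + |a₀| * |c - c₀| := by
      rw [← abs_mul, ← abs_mul]; exact abs_add_le _ _

lemma abs_div_sub_div_le {p p₀ q q₀ m : ℝ} (hm : 0 < m) (hq : m ≤ q) (hq₀ : m ≤ q₀) :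
    |p / q - p₀ / q₀| ≤ (|p - p₀| * |q₀| + |p₀| * |q₀ - q|) / m ^ 2 := by
  have hq_pos : 0 < q := hm.trans_le hq
  have hq₀_pos : 0 < q₀ := hm.trans_le hq₀
  rw [div_sub_div _ _ hq_pos.ne' hq₀_pos.ne', abs_div, abs_of_pos (mul_pos hq_pos hq₀_pos)]
  gcongr
  · rw [mul_comm q p₀]; exact abs_mul_sub_mul_le p p₀ q₀ q
  · rw [sq]; exact mul_le_mul hq hq₀ hm.le hq_pos.le

variable {f g : ℝ → ℝ}

lemma abs_intervalIntegral_le_of_abs_le {x y C : ℝ} (hx : x ∈ Icc (0:ℝ) 1)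
    (hy : y ∈ Icc (0:ℝ) 1) (hf : ∀ t ∈ Icc (0:ℝ) 1, |f t| ≤ C) :
    |∫ t in x..y, f t| ≤ C := by
  have hC : 0 ≤ C := (abs_nonneg _).trans (hf 0 (left_mem_Icc.2 zero_le_one))
  calc |∫ t in x..y, f t| ≤ C * |y - x| :=
        intervalIntegral.norm_integral_le_of_norm_le_const (f := f)
          fun t ht => hf t (uIcc_subset_Icc hx hy (uIoc_subset_uIcc ht))
    _ ≤ C * 1 := by
        gcongr
        exact abs_sub_le_iff.2 ⟨by linarith [hx.1, hy.2], by linarith [hx.2, hy.1]⟩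
    _ = C := mul_one C

lemma intervalIntegrable_of_integrableOn_Icc {x y : ℝ} (hf : IntegrableOn f (Icc 0 1))
    (hx : x ∈ Icc (0:ℝ) 1) (hy : y ∈ Icc (0:ℝ) 1) : IntervalIntegrable f volume x y :=
  (hf.mono_set (uIcc_subset_Icc hx hy)).intervalIntegrable

lemma abs_intervalIntegral_sub_le {x y C : ℝ} (hf : IntegrableOn f (Icc 0 1))
    (hg : IntegrableOn g (Icc 0 1)) (hx : x ∈ Icc (0:ℝ) 1) (hy : y ∈ Icc (0:ℝ) 1)
    (hfg : ∀ t ∈ Icc (0:ℝ) 1, |f t - g t| ≤ C) :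
    |(∫ t in x..y, f t) - ∫ t in x..y, g t| ≤ C := by
  rw [← intervalIntegral.integral_sub (intervalIntegrable_of_integrableOn_Icc hf hx hy)
    (intervalIntegrable_of_integrableOn_Icc hg hx hy)]
  exact abs_intervalIntegral_le_of_abs_le hx hy hfg

lemma mul_sub_le_intervalIntegral {x y m : ℝ} (hxy : x ≤ y)
    (hf : IntervalIntegrable f volume x y) (hm : ∀ t ∈ Icc x y, m ≤ f t) :
    m * (y - x) ≤ ∫ t in x..y, f t := by
  simpa [mul_comm] using intervalIntegral.integral_mono_on hxy intervalIntegrable_const hf hm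

lemma integrableOn_Icc_of_abs_le {C : ℝ} (hf : AEStronglyMeasurable f (volume.restrict (Icc 0 1)))
    (hC : ∀ x ∈ Icc (0:ℝ) 1, |f x| ≤ C) : IntegrableOn f (Icc 0 1) :=
  ⟨hf, HasFiniteIntegral.restrict_of_bounded (C := C) measure_Icc_lt_top
    (ae_restrict_of_forall_mem measurableSet_Icc hC)⟩

lemma integral_abs_le_L2norm (hf : IntervalIntegrable f volume 0 1)
    (hf2 : IntervalIntegrable (fun x => f x ^ 2) volume 0 1) :
    ∫ x in (0:ℝ)..1, |f x| ≤ L2norm f := by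
  set E := ∫ x in (0:ℝ)..1, |f x|
  set S := ∫ x in (0:ℝ)..1, f x ^ 2
  have hE : 0 ≤ E := intervalIntegral.integral_nonneg zero_le_one fun x _ => abs_nonneg _
  have hS : 0 ≤ S := intervalIntegral.integral_nonneg zero_le_one fun x _ => sq_nonneg _
  -- Cauchy–Schwarz: integrating `2 E |f| ≤ E ^ 2 + f ^ 2` gives `E ^ 2 ≤ S`.
  have key := intervalIntegral.integral_mono_on zero_le_one (hf.abs.const_mul (2 * E))
    (intervalIntegrable_const.add hf2) fun x _ =>
      (by nlinarith [sq_nonneg (|f x| - E), sq_abs (f x)] : 2 * E * |f x| ≤ E ^ 2 + f x ^ 2)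
  rw [intervalIntegral.integral_const_mul,
    intervalIntegral.integral_add intervalIntegrable_const hf2, intervalIntegral.integral_const] at key
  simp only [sub_zero, smul_eq_mul, one_mul] at key
  exact (Real.le_sqrt hE hS).2 (by nlinarith)

lemma L2norm_le_of_abs_le {C : ℝ} (hC : 0 ≤ C) (hf : ∀ x ∈ Icc (0:ℝ) 1, |f x| ≤ C) :
    L2norm f ≤ C := by
  have hsq : ∫ x in (0:ℝ)..1, f x ^ 2 ≤ ∫ x in (0:ℝ)..1, C ^ 2 := by
    simp only [intervalIntegral.integral_of_le zero_le_one]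
    refine integral_mono_of_nonneg (Filter.Eventually.of_forall fun x => sq_nonneg _)
      (integrable_const _) ?_
    filter_upwards [ae_restrict_mem measurableSet_Ioc] with x hx
    rw [← sq_abs]
    exact pow_le_pow_left₀ (abs_nonneg _) (hf x (Ioc_subset_Icc_self hx)) 2
  calc L2norm f ≤ √(C ^ 2) := Real.sqrt_le_sqrt (by simpa using hsq)
    _ = C := Real.sqrt_sq hC

lemma abs_exp_le_exp_of_abs_le {s M : ℝ} (h : |s| ≤ M) : |exp s| ≤ exp M := by
  rw [abs_of_pos (exp_pos s)]
  exact exp_le_exp.2 ((le_abs_self s).trans h)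

lemma exp_neg_le_exp_of_abs_le {s M : ℝ} (h : |s| ≤ M) : exp (-M) ≤ exp s :=
  exp_le_exp.2 (neg_le.1 ((neg_le_abs s).trans h))

/-- The bracket of `H_b` and `π_b`, with `I_b` replaced by an arbitrary exponent `I`. -/
noncomputable def G (I : ℝ → ℝ) (x : ℝ) : ℝ :=
  exp (I 1) * (∫ y in x..(1:ℝ), exp (-(I y))) + ∫ y in (0:ℝ)..x, exp (-(I y))

section G

variable {I I₀ : ℝ → ℝ} {M δ x : ℝ}

lemma integrableOn_exp_neg (hI : ContinuousOn I (Icc 0 1)) :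
    IntegrableOn (fun y => exp (-(I y))) (Icc 0 1) :=
  (continuous_exp.comp_continuousOn hI.neg).integrableOn_Icc

lemma continuousOn_G (hI : ContinuousOn I (Icc 0 1)) : ContinuousOn (G I) (Icc 0 1) := by
  have hint : IntegrableOn (fun y => exp (-(I y))) (uIcc 0 1) := by
    rw [uIcc_of_le zero_le_one]; exact integrableOn_exp_neg hI
  have hJ := intervalIntegral.continuousOn_primitive_interval_left hint
  have hP := intervalIntegral.continuousOn_primitive_interval hint
  rw [uIcc_of_le zero_le_one] at hJ hP
  exact (continuousOn_const.mul hJ).add hP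

lemma exp_neg_sq_le_G (hI : ContinuousOn I (Icc 0 1)) (hIM : ∀ t ∈ Icc (0:ℝ) 1, |I t| ≤ M)
    (hx : x ∈ Icc (0:ℝ) 1) : exp (-M) ^ 2 ≤ G I x := by
  have h0 : (0:ℝ) ∈ Icc (0:ℝ) 1 := left_mem_Icc.2 zero_le_one
  have h1 : (1:ℝ) ∈ Icc (0:ℝ) 1 := right_mem_Icc.2 zero_le_one
  have hu_pos := exp_pos (-M)
  have hu_le_one : exp (-M) ≤ 1 := exp_le_one_iff.2 (by linarith [(abs_nonneg _).trans (hIM 0 h0)])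
  have hlow : ∀ t ∈ Icc (0:ℝ) 1, exp (-M) ≤ exp (-(I t)) := fun t ht =>
    exp_neg_le_exp_of_abs_le (by rw [abs_neg]; exact hIM t ht)
  have hint := integrableOn_exp_neg hI
  have hJ : exp (-M) * (1 - x) ≤ ∫ y in x..(1:ℝ), exp (-(I y)) :=
    mul_sub_le_intervalIntegral hx.2 (intervalIntegrable_of_integrableOn_Icc hint hx h1)
      fun t ht => hlow t ⟨hx.1.trans ht.1, ht.2⟩
  have hP : exp (-M) * (x - 0) ≤ ∫ y in (0:ℝ)..x, exp (-(I y)) :=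
    mul_sub_le_intervalIntegral hx.1 (intervalIntegrable_of_integrableOn_Icc hint h0 hx)
      fun t ht => hlow t ⟨ht.1, ht.2.trans hx.2⟩
  have haJ : exp (-M) * (exp (-M) * (1 - x)) ≤ exp (I 1) * ∫ y in x..(1:ℝ), exp (-(I y)) :=
    mul_le_mul (exp_neg_le_exp_of_abs_le (hIM 1 h1)) hJ
      (mul_nonneg hu_pos.le (sub_nonneg.2 hx.2)) (exp_pos _).le
  rw [G]
  nlinarith [mul_nonneg (mul_nonneg hu_pos.le hx.1) (sub_nonneg.2 hu_le_one)]

lemma abs_G_le (hIM : ∀ t ∈ Icc (0:ℝ) 1, |I t| ≤ M) (hx : x ∈ Icc (0:ℝ) 1) :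
    |G I x| ≤ 2 * exp M ^ 2 := by
  have h0 : (0:ℝ) ∈ Icc (0:ℝ) 1 := left_mem_Icc.2 zero_le_one
  have h1 : (1:ℝ) ∈ Icc (0:ℝ) 1 := right_mem_Icc.2 zero_le_one
  have he : 1 ≤ exp M := one_le_exp ((abs_nonneg _).trans (hIM 0 h0))
  have hφ : ∀ t ∈ Icc (0:ℝ) 1, |exp (-(I t))| ≤ exp M := fun t ht =>
    abs_exp_le_exp_of_abs_le (by rw [abs_neg]; exact hIM t ht)
  calc |G I x|
      ≤ |exp (I 1)| * |∫ y in x..(1:ℝ), exp (-(I y))| + |∫ y in (0:ℝ)..x, exp (-(I y))| := by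
        rw [G, ← abs_mul]; exact abs_add_le _ _
    _ ≤ exp M * exp M + exp M := by
        gcongr
        · exact abs_exp_le_exp_of_abs_le (hIM 1 h1)
        · exact abs_intervalIntegral_le_of_abs_le hx h1 hφ
        · exact abs_intervalIntegral_le_of_abs_le h0 hx hφ
    _ ≤ 2 * exp M ^ 2 := by nlinarith

lemma abs_G_sub_G_le (hI : ContinuousOn I (Icc 0 1)) (hI₀ : ContinuousOn I₀ (Icc 0 1))
    (hIM : ∀ t ∈ Icc (0:ℝ) 1, |I t| ≤ M) (hI₀M : ∀ t ∈ Icc (0:ℝ) 1, |I₀ t| ≤ M)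
    (hδ : ∀ t ∈ Icc (0:ℝ) 1, |I t - I₀ t| ≤ δ) (hx : x ∈ Icc (0:ℝ) 1) :
    |G I x - G I₀ x| ≤ 3 * exp M ^ 2 * δ := by
  have h0 : (0:ℝ) ∈ Icc (0:ℝ) 1 := left_mem_Icc.2 zero_le_one
  have h1 : (1:ℝ) ∈ Icc (0:ℝ) 1 := right_mem_Icc.2 zero_le_one
  have he : 1 ≤ exp M := one_le_exp ((abs_nonneg _).trans (hIM 0 h0))
  have hδ_nonneg : 0 ≤ δ := (abs_nonneg _).trans (hδ 0 h0)
  have hφ : ∀ t ∈ Icc (0:ℝ) 1, |exp (-(I t))| ≤ exp M := fun t ht =>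
    abs_exp_le_exp_of_abs_le (by rw [abs_neg]; exact hIM t ht)
  have hφ_sub : ∀ t ∈ Icc (0:ℝ) 1, |exp (-(I t)) - exp (-(I₀ t))| ≤ exp M * δ := fun t ht =>
    (abs_exp_sub_exp_le (m := M) (by rw [abs_neg]; exact hIM t ht)
      (by rw [abs_neg]; exact hI₀M t ht)).trans
      (by rw [neg_sub_neg, abs_sub_comm]; gcongr; exact hδ t ht)
  have hint := integrableOn_exp_neg hI
  have hint₀ := integrableOn_exp_neg hI₀
  calc |G I x - G I₀ x|
      = |(exp (I 1) * (∫ y in x..(1:ℝ), exp (-(I y)))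
            - exp (I₀ 1) * ∫ y in x..(1:ℝ), exp (-(I₀ y)))
          + ((∫ y in (0:ℝ)..x, exp (-(I y))) - ∫ y in (0:ℝ)..x, exp (-(I₀ y)))| := by
        rw [G, G]; ring_nf
    _ ≤ |exp (I 1) - exp (I₀ 1)| * |∫ y in x..(1:ℝ), exp (-(I y))|
          + |exp (I₀ 1)| * |(∫ y in x..(1:ℝ), exp (-(I y))) - ∫ y in x..(1:ℝ), exp (-(I₀ y))|
          + |(∫ y in (0:ℝ)..x, exp (-(I y))) - ∫ y in (0:ℝ)..x, exp (-(I₀ y))| :=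
        (abs_add_le _ _).trans (by gcongr; exact abs_mul_sub_mul_le _ _ _ _)
    _ ≤ exp M * δ * exp M + exp M * (exp M * δ) + exp M * δ := by
        gcongr
        · exact (abs_exp_sub_exp_le (hIM 1 h1) (hI₀M 1 h1)).trans (by gcongr; exact hδ 1 h1)
        · exact abs_intervalIntegral_le_of_abs_le hx h1 hφ
        · exact abs_exp_le_exp_of_abs_le (hI₀M 1 h1)
        · exact abs_intervalIntegral_sub_le hint hint₀ hx h1 hφ_sub
        · exact abs_intervalIntegral_sub_le hint hint₀ h0 hx hφ_sub
    _ ≤ 3 * exp M ^ 2 * δ := by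
        nlinarith [mul_nonneg (mul_nonneg hδ_nonneg (exp_pos M).le) (sub_nonneg.2 he)]

end G

noncomputable def F (σ I : ℝ → ℝ) (x : ℝ) : ℝ :=
  exp (I x) / σ x ^ 2 * G I x

lemma Hb_eq_integral_F (σ c : ℝ → ℝ) : Hb σ c = ∫ x in (0:ℝ)..1, F σ (Ib σ c) x := rfl

lemma πb_eq_F_div (σ c : ℝ → ℝ) (x : ℝ) :
    πb σ c x = F σ (Ib σ c) x / ∫ y in (0:ℝ)..1, F σ (Ib σ c) y := by
  rw [πb, ← Hb_eq_integral_F, F, G]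
  ring

section F

variable {σ I I₀ : ℝ → ℝ} {σL σU M δ x : ℝ}

lemma exp_neg_cube_div_le_F (hσL : 0 < σL) (hσ : ∀ t ∈ Icc (0:ℝ) 1, σL ≤ σ t)
    (hσU : ∀ t ∈ Icc (0:ℝ) 1, σ t ≤ σU) (hI : ContinuousOn I (Icc 0 1))
    (hIM : ∀ t ∈ Icc (0:ℝ) 1, |I t| ≤ M) (hx : x ∈ Icc (0:ℝ) 1) :
    exp (-M) ^ 3 / σU ^ 2 ≤ F σ I x := by
  have hσx : 0 < σ x := hσL.trans_le (hσ x hx)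
  calc exp (-M) ^ 3 / σU ^ 2 = exp (-M) / σU ^ 2 * exp (-M) ^ 2 := by ring
    _ ≤ exp (I x) / σ x ^ 2 * G I x :=
        mul_le_mul (div_le_div₀ (exp_pos _).le (exp_neg_le_exp_of_abs_le (hIM x hx))
            (by positivity) (pow_le_pow_left₀ hσx.le (hσU x hx) 2))
          (exp_neg_sq_le_G hI hIM hx) (by positivity) (by positivity)

lemma abs_F_le (hσL : 0 < σL) (hσ : ∀ t ∈ Icc (0:ℝ) 1, σL ≤ σ t)
    (hIM : ∀ t ∈ Icc (0:ℝ) 1, |I t| ≤ M) (hx : x ∈ Icc (0:ℝ) 1) :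
    |F σ I x| ≤ 2 * exp M ^ 3 / σL ^ 2 := by
  rw [F, abs_mul, abs_div, abs_of_pos (exp_pos _), abs_of_pos (pow_pos (hσL.trans_le (hσ x hx)) 2)]
  calc exp (I x) / σ x ^ 2 * |G I x| ≤ exp M / σL ^ 2 * (2 * exp M ^ 2) := by
        gcongr
        · exact (le_abs_self _).trans (hIM x hx)
        · exact hσ x hx
        · exact abs_G_le hIM hx
    _ = 2 * exp M ^ 3 / σL ^ 2 := by ring

lemma abs_F_sub_F_le (hσL : 0 < σL) (hσ : ∀ t ∈ Icc (0:ℝ) 1, σL ≤ σ t)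
    (hI : ContinuousOn I (Icc 0 1)) (hI₀ : ContinuousOn I₀ (Icc 0 1))
    (hIM : ∀ t ∈ Icc (0:ℝ) 1, |I t| ≤ M) (hI₀M : ∀ t ∈ Icc (0:ℝ) 1, |I₀ t| ≤ M)
    (hδ : ∀ t ∈ Icc (0:ℝ) 1, |I t - I₀ t| ≤ δ) (hx : x ∈ Icc (0:ℝ) 1) :
    |F σ I x - F σ I₀ x| ≤ 5 * exp M ^ 3 / σL ^ 2 * δ := by
  have hdiff : F σ I x - F σ I₀ x = (exp (I x) * G I x - exp (I₀ x) * G I₀ x) / σ x ^ 2 := by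
    simp only [F]; ring
  have hδ_nonneg : 0 ≤ δ := (abs_nonneg _).trans (hδ x hx)
  rw [hdiff, abs_div, abs_of_pos (pow_pos (hσL.trans_le (hσ x hx)) 2)]
  calc |exp (I x) * G I x - exp (I₀ x) * G I₀ x| / σ x ^ 2
      ≤ (|exp (I x) - exp (I₀ x)| * |G I x| + |exp (I₀ x)| * |G I x - G I₀ x|) / σL ^ 2 := by
        gcongr
        · exact abs_mul_sub_mul_le _ _ _ _
        · exact hσ x hx
    _ ≤ (exp M * δ * (2 * exp M ^ 2) + exp M * (3 * exp M ^ 2 * δ)) / σL ^ 2 := by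
        gcongr
        · exact (abs_exp_sub_exp_le (hIM x hx) (hI₀M x hx)).trans (by gcongr; exact hδ x hx)
        · exact abs_G_le hIM hx
        · exact abs_exp_le_exp_of_abs_le (hI₀M x hx)
        · exact abs_G_sub_G_le hI hI₀ hIM hI₀M hδ hx
    _ = 5 * exp M ^ 3 / σL ^ 2 * δ := by ring

lemma integrableOn_F (hσm : Measurable σ) (hσL : 0 < σL) (hσ : ∀ t ∈ Icc (0:ℝ) 1, σL ≤ σ t)
    (hI : ContinuousOn I (Icc 0 1)) (hIM : ∀ t ∈ Icc (0:ℝ) 1, |I t| ≤ M) :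
    IntegrableOn (F σ I) (Icc 0 1) := by
  have hexp : AEMeasurable (fun x => exp (I x)) (volume.restrict (Icc 0 1)) :=
    (continuous_exp.comp_continuousOn hI).aemeasurable measurableSet_Icc
  have hG : AEMeasurable (G I) (volume.restrict (Icc 0 1)) :=
    (continuousOn_G hI).aemeasurable measurableSet_Icc
  exact integrableOn_Icc_of_abs_le
    ((hexp.div (hσm.pow_const 2).aemeasurable).mul hG).aestronglyMeasurable
    fun x hx => abs_F_le hσL hσ hIM hx

lemma abs_F_div_integral_sub_le (hσm : Measurable σ) (hσL : 0 < σL)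
    (hσ : ∀ t ∈ Icc (0:ℝ) 1, σL ≤ σ t) (hσU : ∀ t ∈ Icc (0:ℝ) 1, σ t ≤ σU)
    (hI : ContinuousOn I (Icc 0 1)) (hI₀ : ContinuousOn I₀ (Icc 0 1))
    (hIM : ∀ t ∈ Icc (0:ℝ) 1, |I t| ≤ M) (hI₀M : ∀ t ∈ Icc (0:ℝ) 1, |I₀ t| ≤ M)
    (hδ : ∀ t ∈ Icc (0:ℝ) 1, |I t - I₀ t| ≤ δ) (hx : x ∈ Icc (0:ℝ) 1) :
    |F σ I x / (∫ y in (0:ℝ)..1, F σ I y) - F σ I₀ x / ∫ y in (0:ℝ)..1, F σ I₀ y|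
      ≤ 2 * (2 * exp M ^ 3 / σL ^ 2) * (5 * exp M ^ 3 / σL ^ 2 * δ)
          / (exp (-M) ^ 3 / σU ^ 2) ^ 2 := by
  have h0 : (0:ℝ) ∈ Icc (0:ℝ) 1 := left_mem_Icc.2 zero_le_one
  have h1 : (1:ℝ) ∈ Icc (0:ℝ) 1 := right_mem_Icc.2 zero_le_one
  have hσU_pos : 0 < σU := hσL.trans_le ((hσ 0 h0).trans (hσU 0 h0))
  have hδ_nonneg : 0 ≤ δ := (abs_nonneg _).trans (hδ 0 h0)
  have hlow : ∀ J : ℝ → ℝ, ContinuousOn J (Icc 0 1) → (∀ t ∈ Icc (0:ℝ) 1, |J t| ≤ M) →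
      exp (-M) ^ 3 / σU ^ 2 ≤ ∫ y in (0:ℝ)..1, F σ J y := fun J hJ hJM => by
    simpa using mul_sub_le_intervalIntegral zero_le_one
      (intervalIntegrable_of_integrableOn_Icc (integrableOn_F hσm hσL hσ hJ hJM) h0 h1)
      fun t ht => exp_neg_cube_div_le_F hσL hσ hσU hJ hJM ht
  calc _ ≤ (|F σ I x - F σ I₀ x| * |∫ y in (0:ℝ)..1, F σ I₀ y|
          + |F σ I₀ x| * |(∫ y in (0:ℝ)..1, F σ I₀ y) - ∫ y in (0:ℝ)..1, F σ I y|)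
          / (exp (-M) ^ 3 / σU ^ 2) ^ 2 :=
        abs_div_sub_div_le (by positivity) (hlow I hI hIM) (hlow I₀ hI₀ hI₀M)
    _ ≤ (5 * exp M ^ 3 / σL ^ 2 * δ * (2 * exp M ^ 3 / σL ^ 2)
          + 2 * exp M ^ 3 / σL ^ 2 * (5 * exp M ^ 3 / σL ^ 2 * δ))
          / (exp (-M) ^ 3 / σU ^ 2) ^ 2 := by
        have hF_sub : ∀ t ∈ Icc (0:ℝ) 1, |F σ I t - F σ I₀ t| ≤ 5 * exp M ^ 3 / σL ^ 2 * δ :=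
          fun t ht => abs_F_sub_F_le hσL hσ hI hI₀ hIM hI₀M hδ ht
        gcongr
        · exact hF_sub x hx
        · exact abs_intervalIntegral_le_of_abs_le h0 h1 fun t ht => abs_F_le hσL hσ hI₀M ht
        · exact abs_F_le hσL hσ hI₀M hx
        · rw [abs_sub_comm]
          exact abs_intervalIntegral_sub_le (integrableOn_F hσm hσL hσ hI hIM)
            (integrableOn_F hσm hσL hσ hI₀ hI₀M) h0 h1 hF_sub
    _ = _ := by ring

end F

section Ib

variable {K₀ σL x : ℝ} {σ b b₀ c : ℝ → ℝ}

lemma abs_two_mul_div_sq_le {a s : ℝ} (hσL : 0 < σL) (hs : σL ≤ s) :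
    |2 * a / s ^ 2| ≤ 2 / σL ^ 2 * |a| := by
  rw [abs_div, abs_mul, abs_two, abs_of_nonneg (sq_nonneg s)]
  calc 2 * |a| / s ^ 2 ≤ 2 * |a| / σL ^ 2 := by gcongr
    _ = 2 / σL ^ 2 * |a| := by ring

lemma integrableOn_drift (hσL : 0 < σL) (hσm : Measurable σ)
    (hσ : ∀ t ∈ Icc (0:ℝ) 1, σL ≤ σ t) (hcm : Measurable c)
    (hc : ∀ t ∈ Icc (0:ℝ) 1, |c t| ≤ K₀) :
    IntegrableOn (fun y => 2 * c y / σ y ^ 2) (Icc 0 1) :=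
  integrableOn_Icc_of_abs_le (C := 2 / σL ^ 2 * K₀)
    (by fun_prop : Measurable fun y => 2 * c y / σ y ^ 2).aestronglyMeasurable
    fun y hy => (abs_two_mul_div_sq_le hσL (hσ y hy)).trans (by gcongr; exact hc y hy)

lemma continuousOn_Ib (hσL : 0 < σL) (hσm : Measurable σ)
    (hσ : ∀ t ∈ Icc (0:ℝ) 1, σL ≤ σ t) (hcm : Measurable c)
    (hc : ∀ t ∈ Icc (0:ℝ) 1, |c t| ≤ K₀) :
    ContinuousOn (Ib σ c) (Icc 0 1) := by
  have h := intervalIntegral.continuousOn_primitive_interval (a := 0) (b := 1)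
    (by rw [uIcc_of_le zero_le_one]; exact integrableOn_drift hσL hσm hσ hcm hc)
  rwa [uIcc_of_le zero_le_one] at h

lemma abs_Ib_le (hσL : 0 < σL) (hσ : ∀ t ∈ Icc (0:ℝ) 1, σL ≤ σ t)
    (hc : ∀ t ∈ Icc (0:ℝ) 1, |c t| ≤ K₀) (hx : x ∈ Icc (0:ℝ) 1) :
    |Ib σ c x| ≤ 2 / σL ^ 2 * K₀ :=
  abs_intervalIntegral_le_of_abs_le (left_mem_Icc.2 zero_le_one) hx
    fun y hy => (abs_two_mul_div_sq_le hσL (hσ y hy)).trans (by gcongr; exact hc y hy)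

lemma abs_Ib_sub_Ib_le (hσL : 0 < σL) (hσm : Measurable σ)
    (hσ : ∀ t ∈ Icc (0:ℝ) 1, σL ≤ σ t) (hbm : Measurable b) (hb₀m : Measurable b₀)
    (hb : ∀ t ∈ Icc (0:ℝ) 1, |b t| ≤ K₀) (hb₀ : ∀ t ∈ Icc (0:ℝ) 1, |b₀ t| ≤ K₀)
    (hx : x ∈ Icc (0:ℝ) 1) :
    |Ib σ b x - Ib σ b₀ x| ≤ 2 / σL ^ 2 * L2norm (fun y => b y - b₀ y) := by
  have h0 : (0:ℝ) ∈ Icc (0:ℝ) 1 := left_mem_Icc.2 zero_le_one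
  have h1 : (1:ℝ) ∈ Icc (0:ℝ) 1 := right_mem_Icc.2 zero_le_one
  have hsub : ∀ t ∈ Icc (0:ℝ) 1, |b t - b₀ t| ≤ 2 * K₀ := fun t ht =>
    (abs_sub _ _).trans (by linarith [hb t ht, hb₀ t ht])
  have hsub_sq : ∀ t ∈ Icc (0:ℝ) 1, |(b t - b₀ t) ^ 2| ≤ (2 * K₀) ^ 2 := fun t ht => by
    rw [abs_pow]; exact pow_le_pow_left₀ (abs_nonneg _) (hsub t ht) 2
  have hsub_int := integrableOn_Icc_of_abs_le (hbm.sub hb₀m).aestronglyMeasurable hsub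
  have hsub_sq_int := integrableOn_Icc_of_abs_le
    ((hbm.sub hb₀m).pow_const 2).aestronglyMeasurable hsub_sq
  have hdrift_int := integrableOn_drift hσL hσm hσ (hbm.sub hb₀m) hsub
  have hIb_sub : Ib σ b x - Ib σ b₀ x = ∫ y in (0:ℝ)..x, 2 * (b y - b₀ y) / σ y ^ 2 := by
    rw [Ib, Ib, ← intervalIntegral.integral_sub
      (intervalIntegrable_of_integrableOn_Icc (integrableOn_drift hσL hσm hσ hbm hb) h0 hx)
      (intervalIntegrable_of_integrableOn_Icc (integrableOn_drift hσL hσm hσ hb₀m hb₀) h0 hx)]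
    congr 1 with y
    ring
  calc |Ib σ b x - Ib σ b₀ x| ≤ ∫ y in (0:ℝ)..x, |2 * (b y - b₀ y) / σ y ^ 2| :=
        hIb_sub ▸ intervalIntegral.abs_integral_le_integral_abs hx.1
    _ ≤ ∫ y in (0:ℝ)..1, |2 * (b y - b₀ y) / σ y ^ 2| :=
        intervalIntegral.integral_mono_interval le_rfl hx.1 hx.2
          (Filter.Eventually.of_forall fun y => abs_nonneg _)
          (intervalIntegrable_of_integrableOn_Icc hdrift_int h0 h1).abs
    _ ≤ ∫ y in (0:ℝ)..1, 2 / σL ^ 2 * |b y - b₀ y| :=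
        intervalIntegral.integral_mono_on zero_le_one
          (intervalIntegrable_of_integrableOn_Icc hdrift_int h0 h1).abs
          ((intervalIntegrable_of_integrableOn_Icc hsub_int h0 h1).abs.const_mul _)
          fun y hy => abs_two_mul_div_sq_le hσL (hσ y hy)
    _ ≤ 2 / σL ^ 2 * L2norm (fun y => b y - b₀ y) := by
        rw [intervalIntegral.integral_const_mul]
        gcongr
        exact integral_abs_le_L2norm (intervalIntegrable_of_integrableOn_Icc hsub_int h0 h1)
          (intervalIntegrable_of_integrableOn_Icc hsub_sq_int h0 h1)

end Ib

end InvariantDensity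

open InvariantDensity in
theorem statement9 (K₀ σL σU : ℝ) (hσL : 0 < σL) (hσLU : σL ≤ σU) :
    ∃ C > (0:ℝ), ∀ σ : ℝ → ℝ, Measurable σ →
      (∀ x ∈ Set.Icc (0:ℝ) 1, σL ≤ σ x) →
      (∀ x ∈ Set.Icc (0:ℝ) 1, σ x ≤ σU) →
      ∀ b b₀ : ℝ → ℝ, Measurable b → Measurable b₀ →
      (∀ x ∈ Set.Icc (0:ℝ) 1, |b x| ≤ K₀) →
      (∀ x ∈ Set.Icc (0:ℝ) 1, |b₀ x| ≤ K₀) →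
      (∀ x ∈ Set.Icc (0:ℝ) 1,
        |πb σ b x - πb σ b₀ x| ≤ C * L2norm (fun y => b y - b₀ y)) ∧
      L2norm (fun x => πb σ b x - πb σ b₀ x) ≤ C * L2norm (fun y => b y - b₀ y) := by
  set M := 2 / σL ^ 2 * K₀
  have hσU_pos : 0 < σU := hσL.trans_le hσLU
  set C := 2 * (2 * exp M ^ 3 / σL ^ 2) * (5 * exp M ^ 3 / σL ^ 2)
    / (exp (-M) ^ 3 / σU ^ 2) ^ 2 * (2 / σL ^ 2) with hC
  refine ⟨C, by positivity, fun σ hσm hσ hσU b b₀ hbm hb₀m hb hb₀ => ?_⟩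
  have hpointwise : ∀ x ∈ Icc (0:ℝ) 1,
      |πb σ b x - πb σ b₀ x| ≤ C * L2norm (fun y => b y - b₀ y) := fun x hx => by
    rw [πb_eq_F_div, πb_eq_F_div]
    refine (abs_F_div_integral_sub_le hσm hσL hσ hσU
      (continuousOn_Ib hσL hσm hσ hbm hb) (continuousOn_Ib hσL hσm hσ hb₀m hb₀)
      (fun t ht => abs_Ib_le hσL hσ hb ht) (fun t ht => abs_Ib_le hσL hσ hb₀ ht)
      (fun t ht => abs_Ib_sub_Ib_le hσL hσm hσ hbm hb₀m hb hb₀ ht) hx).trans_eq ?_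
    rw [hC]; ring
  exact ⟨hpointwise,
    L2norm_le_of_abs_le (mul_nonneg (by positivity) (Real.sqrt_nonneg _)) hpointwise⟩
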